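/- arXiv:1311.6024 — 4 statements merged into one kernel-verified Lean document; each statement's English description precedes it below -/
import Mathlib

section
/- Let R ≥ 0 and let x be a feasible solution to the configuration LP (P) for RVRP of value k* = Σ_P x_P. For a nonempty set S ⊆ V and a node v ∈ S, define τ(v,S) = Σ_{P ∈ C_R : v ∈ P, red(v,P) ⊆ S} x_P, and call S active if τ(v,S) < 1/2 for every v ∈ S. Then there exists an assignment z of nonnegative values to the edges of the complete graph on V ∪ {r} such that Σ_{e ∈ δ(S)} z_e ≥ 1 for every active set S (where δ(S) is the set of edges with exactly one endpoint in S), and Σ_e c_e·z_e ≤ 3·k*·R. -/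
/-- Total cost of traversing the list of nodes in order. -/
def pathCost {α : Type*} (c : α → α → ℝ) : List α → ℝ
  | [] => 0
  | [_] => 0
  | a :: b :: l => c a b + pathCost c (b :: l)

/-- A rooted path: a list of distinct nodes starting at the root `r`. -/
def IsRootedPath {α : Type*} (r : α) (w : List α) : Prop :=
  w.head? = some r ∧ w.Nodup

/-- The regret of a rooted path: its cost minus the distance from `r` to its last node. -/
def pathRegret {α : Type*} (c : α → α → ℝ) (r : α) (w : List α) : ℝ :=
  pathCost c w - c r (w.getLastD r)

/-- The `i`-th edge `(w_{i−1}, w_i)` of the path `w` (for `1 ≤ i < w.length`) is red if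
there exist indices `j ≤ i−1` and `l ≥ i` with `D_{w_j} ≥ D_{w_l}`. -/
def redEdge {α : Type*} (c : α → α → ℝ) (r : α) (w : List α) (i : ℕ) : Prop :=
  ∃ j l, j < i ∧ i ≤ l ∧ l < w.length ∧ c r (w.getD l r) ≤ c r (w.getD j r)

/-- Positions `p` and `q` of `w` lie in the same maximal red subpath iff all edges strictly
between them are red. -/
def inSameRedInterval {α : Type*} (c : α → α → ℝ) (r : α) (w : List α) (p q : ℕ) : Prop :=
  (∀ i, p < i → i ≤ q → redEdge c r w i) ∧ (∀ i, q < i → i ≤ p → redEdge c r w i)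

/-- `red(v,w) ⊆ S`: every node of the maximal red subpath of `w` containing `v`
belongs to `S`. -/
def redSubpathSubset {α : Type*} [DecidableEq α] (c : α → α → ℝ) (r : α)
    (w : List α) (v : α) (S : Finset α) : Prop :=
  ∀ q < w.length, inSameRedInterval c r w (w.idxOf v) q → w.getD q r ∈ S

/-!
Take `z = 2 ∑_P x_P χ_P`, where `χ_P` counts the red edges of `P` in both orientations. If `S`
is active and `v ∈ S`, the paths through `v` whose red subpath at `v` leaves `S` carry mass more
than `1/2`, and each of them has a red edge in `δ(S)`.

For the cost, read a path as a walk through the heights `D_{w_i}`; a step costs at least its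
change of height. A blue step costs at least its rise, and on a maximal red stretch rising from
`D_s` to `D_t` every intermediate height is crossed at least three times, so the stretch costs
at least `3 (D_t - D_s)`. Hence the red edges of a path cost at most `3/2` of its regret.
-/

open Finset

section Walk

variable {D e : ℕ → ℝ}

theorem abs_sub_le_sum_Ico (hD : ∀ i, |D (i + 1) - D i| ≤ e i) {j l : ℕ} (hjl : j ≤ l) :
    |D l - D j| ≤ ∑ i ∈ Ico j l, e i := by
  induction l, hjl using Nat.le_induction with
  | base => simp
  | succ l hjl ih =>
    rw [sum_Ico_succ_top hjl]
    calc |D (l + 1) - D j| ≤ |D (l + 1) - D l| + |D l - D j| := abs_sub_le _ _ _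
      _ ≤ _ := by linarith [hD l]

theorem sub_add_two_mul_sub_le_sum_Ico (hD : ∀ i, |D (i + 1) - D i| ≤ e i) {s t : ℕ}
    (hst : s ≤ t) {y : ℝ} (hyt : y ≤ D t)
    (hred : ∀ i, s ≤ i → i < t →
      ∃ j, s ≤ j ∧ j ≤ i ∧ (y ≤ D j ∨ ∃ l, i < l ∧ l ≤ t ∧ D l ≤ D j)) :
    D t - D s + 2 * (y - D s) ≤ ∑ i ∈ Ico s t, e i := by
  induction t using Nat.strong_induction_on generalizing y with
  | _ t ih =>
  have hrise := (abs_sub_le_iff.1 (abs_sub_le_sum_Ico hD hst)).1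
  rcases le_or_gt y (D s) with hys | hys
  · linarith
  classical
  -- `p` is the first position at height `≥ y` and `v` the lowest one in `[p, t]`: the walk
  -- rises to `D p`, falls to `D v` and rises again to `D t`, and the part up to `p`
  -- satisfies the hypothesis at the level `D v`.
  have hex : ∃ k, s ≤ k ∧ y ≤ D k := ⟨t, hst, hyt⟩
  obtain ⟨p, ⟨hsp, hyp⟩, hmin⟩ : ∃ p, (s ≤ p ∧ y ≤ D p) ∧ ∀ k < p, ¬(s ≤ k ∧ y ≤ D k) :=
    ⟨_, Nat.find_spec hex, fun _ => Nat.find_min hex⟩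
  have hlow : ∀ k, s ≤ k → k < p → D k < y := fun k hsk hkp =>
    not_le.1 fun h => hmin k hkp ⟨hsk, h⟩
  have hpt : p ≤ t := not_lt.1 fun htp => hmin t htp ⟨hst, hyt⟩
  have hsp_lt : s < p := hsp.lt_of_ne (by rintro rfl; linarith)
  obtain ⟨j, hsj, hjp, hj⟩ := hred (p - 1) (by omega) (by omega)
  obtain ⟨l, hpl, hlt, hlj⟩ := hj.resolve_left (not_le.2 (hlow j hsj (by omega)))
  obtain ⟨v, hv, hvmin⟩ := (Icc p t).exists_min_image D ⟨t, mem_Icc.2 ⟨hpt, le_rfl⟩⟩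
  rw [mem_Icc] at hv
  have hvy : D v < y :=
    (hvmin l (mem_Icc.2 ⟨by omega, hlt⟩)).trans_lt (hlj.trans_lt (hlow j hsj (by omega)))
  have hpv : p < v := hv.1.lt_of_ne (by rintro rfl; linarith)
  have hvt : v < t := hv.2.lt_of_ne (by rintro rfl; linarith)
  have hprefix := ih p (by omega) hsp_lt.le (hvy.le.trans hyp) fun i hsi hip => by
    obtain ⟨j, hsj, hji, hj⟩ := hred i hsi (by omega)
    refine ⟨j, hsj, hji, ?_⟩
    obtain ⟨l, hil, hlt, hlj⟩ := hj.resolve_left (not_le.2 (hlow j hsj (by omega)))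
    by_cases hlp : l ≤ p
    · exact Or.inr ⟨l, hil, hlp, hlj⟩
    · exact Or.inl ((hvmin l (mem_Icc.2 ⟨by omega, hlt⟩)).trans hlj)
  have hfall := (abs_sub_le_iff.1 (abs_sub_le_sum_Ico hD hpv.le)).2
  have hclimb := (abs_sub_le_iff.1 (abs_sub_le_sum_Ico hD hvt.le)).1
  rw [← sum_Ico_consecutive _ (hsp_lt.le.trans hpv.le) hvt.le,
    ← sum_Ico_consecutive _ hsp_lt.le hpv.le]
  linarith

theorem three_mul_sub_le_sum_Ico (hD : ∀ i, |D (i + 1) - D i| ≤ e i) {s t : ℕ} (hst : s ≤ t)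
    (hred : ∀ i, s ≤ i → i < t → ∃ j l, s ≤ j ∧ j ≤ i ∧ i < l ∧ l ≤ t ∧ D l ≤ D j) :
    3 * (D t - D s) ≤ ∑ i ∈ Ico s t, e i := by
  have := sub_add_two_mul_sub_le_sum_Ico hD hst le_rfl fun i hsi hit => by
    obtain ⟨j, l, hsj, hji, hil, hlt, hlj⟩ := hred i hsi hit
    exact ⟨j, hsj, hji, Or.inr ⟨l, hil, hlt, hlj⟩⟩
  linarith

/-- Step `i` joins positions `i` and `i + 1` of a walk at heights `D` ending at position `t`. -/
def IsRedStep (D : ℕ → ℝ) (t i : ℕ) : Prop :=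
  ∃ j l, j ≤ i ∧ i < l ∧ l ≤ t ∧ D l ≤ D j

open scoped Classical in
theorem sum_isRedStep_le (hD : ∀ i, |D (i + 1) - D i| ≤ e i) (t : ℕ) :
    ∑ i ∈ range t, (if IsRedStep D t i then e i else 0) ≤
      3 / 2 * (∑ i ∈ range t, e i - (D t - D 0)) := by
  induction t using Nat.strong_induction_on with
  | _ t ih =>
  by_cases hall : ∀ i < t, IsRedStep D t i
  · have hblock := three_mul_sub_le_sum_Ico hD (Nat.zero_le t) fun i _ hit => by
      obtain ⟨j, l, h⟩ := hall i hit
      exact ⟨j, l, Nat.zero_le j, h⟩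
    rw [sum_congr rfl fun i hi => if_pos (hall i (mem_range.1 hi)), range_eq_Ico]
    linarith
  push Not at hall
  obtain ⟨b, hb, hbmax⟩ := ((range t).filter fun i => ¬ IsRedStep D t i).exists_max_image id
    (by obtain ⟨i, hi, h⟩ := hall; exact ⟨i, by simp [hi, h]⟩)
  simp only [mem_filter, mem_range, id] at hb hbmax
  obtain ⟨hbt, hblue⟩ := hb
  have hred : ∀ i, b < i → i < t → IsRedStep D t i := fun i hbi hit =>
    not_not.1 fun h => (hbmax i ⟨hit, h⟩).not_gt hbi
  -- the witnesses of a red step lie on the same side of the last blue step `b`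
  have hbefore : ∀ i < b, IsRedStep D t i ↔ IsRedStep D b i := fun i hib =>
    ⟨fun ⟨j, l, hji, hil, _, hlj⟩ =>
      ⟨j, l, hji, hil, not_lt.1 fun hbl => hblue ⟨j, l, by omega, hbl, by omega, hlj⟩, hlj⟩,
     fun ⟨j, l, hji, hil, hlb, hlj⟩ => ⟨j, l, hji, hil, by omega, hlj⟩⟩
  have hblock := three_mul_sub_le_sum_Ico hD hbt fun i hbi hit => by
    obtain ⟨j, l, hji, hil, hlt, hlj⟩ := hred i hbi hit
    exact ⟨j, l, not_le.1 fun hjb => hblue ⟨j, l, hjb, by omega, hlt, hlj⟩, hji, hil, hlt, hlj⟩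
  have hstep := (abs_sub_le_iff.1 (hD b)).1
  have hprefix := ih b hbt
  rw [← sum_range_add_sum_Ico _ hbt.le, sum_eq_sum_Ico_succ_bot hbt, if_neg hblue,
    sum_congr rfl fun i hi => if_congr (hbefore i (mem_range.1 hi)) rfl rfl,
    sum_congr rfl fun i hi => if_pos (hred i (mem_Ico.1 hi).1 (mem_Ico.1 hi).2),
    ← sum_range_add_sum_Ico _ hbt.le, sum_eq_sum_Ico_succ_bot hbt]
  linarith

end Walk

theorem exists_step_of_not {f : ℕ → Prop} {a b : ℕ} (hab : a ≤ b) (ha : f a) (hb : ¬f b) :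
    ∃ j, a ≤ j ∧ j < b ∧ f j ∧ ¬f (j + 1) := by
  induction b, hab using Nat.le_induction with
  | base => exact absurd ha hb
  | succ b hab ih =>
    by_cases hfb : f b
    · exact ⟨b, hab, b.lt_succ_self, hfb, hb⟩
    · obtain ⟨j, haj, hjb, hj⟩ := ih hfb
      exact ⟨j, haj, by omega, hj⟩

section Path

variable {α : Type*} (c : α → α → ℝ) (r : α)

theorem pathCost_eq_sum_range : ∀ w : List α,
    pathCost c w = ∑ i ∈ range (w.length - 1), c (w.getD i r) (w.getD (i + 1) r)
  | [] => by simp [pathCost]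
  | [_] => by simp [pathCost]
  | a :: b :: l => by
    simp [pathCost, pathCost_eq_sum_range (b :: l), sum_range_succ', add_comm]

theorem abs_sub_le_of_triangle (hsymm : ∀ u v, c u v = c v u)
    (htri : ∀ u v w, c u v ≤ c u w + c w v) (a b : α) : |c r b - c r a| ≤ c a b := by
  rw [abs_sub_le_iff]
  constructor <;> linarith [htri r b a, htri r a b, hsymm a b]

theorem redEdge_succ_iff {w : List α} (hw : w ≠ []) (i : ℕ) :
    redEdge c r w (i + 1) ↔ IsRedStep (fun k => c r (w.getD k r)) (w.length - 1) i := by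
  have := List.length_pos_iff.2 hw
  exact ⟨fun ⟨j, l, hji, hil, hlw, hlj⟩ => ⟨j, l, by omega, by omega, by omega, hlj⟩,
    fun ⟨j, l, hji, hil, hlw, hlj⟩ => ⟨j, l, by omega, by omega, by omega, hlj⟩⟩

open scoped Classical in
theorem sum_redEdge_cost_le (hsymm : ∀ u v, c u v = c v u)
    (htri : ∀ u v w, c u v ≤ c u w + c w v) (hrefl : ∀ u, c u u = 0) {R : ℝ} {w : List α}
    (hw : IsRootedPath r w) (hreg : pathRegret c r w ≤ R) :
    ∑ i ∈ range (w.length - 1),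
      (if redEdge c r w (i + 1) then c (w.getD i r) (w.getD (i + 1) r) else 0) ≤ 3 / 2 * R := by
  obtain ⟨w, rfl⟩ := List.head?_eq_some_iff.1 hw.1
  have hseq := sum_isRedStep_le (D := fun k => c r ((r :: w).getD k r))
    (fun i => abs_sub_le_of_triangle c r hsymm htri _ _) ((r :: w).length - 1)
  simp only [List.getD_cons_zero, hrefl, sub_zero] at hseq
  rw [pathRegret, pathCost_eq_sum_range c r, List.getLastD_eq_getLast?, List.getLast?_eq_getElem?,
    ← List.getD_eq_getElem?_getD] at hreg
  simp only [redEdge_succ_iff c r (List.cons_ne_nil r w)]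
  linarith

theorem exists_redEdge_crossing [DecidableEq α] {w : List α} {S : Finset α} {v : α}
    (hv : v ∈ w) (hvS : v ∈ S) (hns : ¬redSubpathSubset c r w v S) :
    ∃ i < w.length - 1, redEdge c r w (i + 1) ∧
      (w.getD i r ∈ S ∧ w.getD (i + 1) r ∉ S ∨ w.getD i r ∉ S ∧ w.getD (i + 1) r ∈ S) := by
  simp only [redSubpathSubset, not_forall, exists_prop] at hns
  obtain ⟨q, hq, ⟨hfwd, hbwd⟩, hqS⟩ := hns
  have hplen := List.idxOf_lt_length_iff.2 hv
  have hp : w.getD (w.idxOf v) r = v := by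
    rw [List.getD_eq_getElem?_getD, List.getElem?_eq_getElem hplen]
    simp
  rcases lt_or_gt_of_ne (show w.idxOf v ≠ q by rintro h; rw [← h, hp] at hqS; exact hqS hvS)
    with hpq | hqp
  · obtain ⟨j, hpj, hjq, hj, hj1⟩ :=
      exists_step_of_not (f := (w.getD · r ∈ S)) hpq.le (by rwa [hp]) hqS
    exact ⟨j, by omega, hfwd (j + 1) (by omega) (by omega), Or.inl ⟨hj, hj1⟩⟩
  · obtain ⟨j, hqj, hjp, hj, hj1⟩ :=
      exists_step_of_not (f := (w.getD · r ∉ S)) hqp.le hqS (by rwa [hp, not_not])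
    exact ⟨j, by omega, hbwd (j + 1) (by omega) (by omega), Or.inr ⟨hj, not_not.1 hj1⟩⟩

end Path

theorem sum_sum_mul_sum_comm {β ι : Type*} [Fintype ι] (A B : Finset β) (g : β → β → ℝ)
    (a : ι → ℝ) (W : ι → β → β → ℝ) :
    ∑ u ∈ A, ∑ v ∈ B, g u v * ∑ i, a i * W i u v = ∑ i, a i * ∑ u ∈ A, ∑ v ∈ B, g u v * W i u v := by
  simp only [mul_sum, mul_left_comm (g _ _)]
  conv_rhs => rw [sum_comm]
  exact sum_congr rfl fun _ _ => sum_comm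

section EdgeWeight

variable {α ι : Type*} [DecidableEq α] {I : Finset ι} {f : ι → α × α}

def edgeWeight (I : Finset ι) (f : ι → α × α) (u v : α) : ℝ :=
  ∑ i ∈ I, ((if f i = (u, v) then 1 else 0) + (if f i = (v, u) then 1 else 0))

theorem edgeWeight_nonneg (u v : α) : 0 ≤ edgeWeight I f u v :=
  sum_nonneg fun _ _ => by positivity

theorem edgeWeight_comm (u v : α) : edgeWeight I f u v = edgeWeight I f v u :=
  sum_congr rfl fun _ _ => add_comm _ _

theorem sum_sum_mul_edgeWeight [Fintype α] (c : α → α → ℝ) :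
    ∑ u, ∑ v, c u v * edgeWeight I f u v = ∑ i ∈ I, (c (f i).1 (f i).2 + c (f i).2 (f i).1) := by
  simp only [edgeWeight, mul_sum]
  rw [sum_congr rfl fun u _ => sum_comm, sum_comm]
  refine sum_congr rfl fun i _ => ?_
  obtain ⟨a, b⟩ := f i
  simp [mul_add, sum_add_distrib, Prod.ext_iff, ite_and]

theorem one_le_sum_sum_compl_edgeWeight [Fintype α] {S : Finset α} {i : ι} (hi : i ∈ I)
    (hcross : (f i).1 ∈ S ∧ (f i).2 ∉ S ∨ (f i).1 ∉ S ∧ (f i).2 ∈ S) :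
    1 ≤ ∑ u ∈ S, ∑ v ∈ Sᶜ, edgeWeight I f u v := by
  obtain ⟨u, v, huS, hvS, huv⟩ : ∃ u v, u ∈ S ∧ v ∉ S ∧ (f i = (u, v) ∨ f i = (v, u)) := by
    rcases hcross with ⟨h1, h2⟩ | ⟨h1, h2⟩
    · exact ⟨(f i).1, (f i).2, h1, h2, Or.inl rfl⟩
    · exact ⟨(f i).2, (f i).1, h2, h1, Or.inr rfl⟩
  have hterm : 1 ≤ (if f i = (u, v) then (1 : ℝ) else 0) + (if f i = (v, u) then 1 else 0) := by
    rcases huv with h | h <;> rw [h, if_pos rfl]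
    · exact le_add_of_nonneg_right (by positivity)
    · exact le_add_of_nonneg_left (by positivity)
  calc 1 ≤ edgeWeight I f u v :=
        hterm.trans (single_le_sum (f := fun j => (if f j = (u, v) then (1 : ℝ) else 0) +
          (if f j = (v, u) then 1 else 0)) (fun _ _ => by positivity) hi)
    _ ≤ ∑ v' ∈ Sᶜ, edgeWeight I f u v' :=
      single_le_sum (f := edgeWeight I f u) (fun _ _ => edgeWeight_nonneg _ _) (mem_compl.2 hvS)
    _ ≤ ∑ u ∈ S, ∑ v ∈ Sᶜ, edgeWeight I f u v :=
      single_le_sum (f := fun u => ∑ v' ∈ Sᶜ, edgeWeight I f u v')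
        (fun _ _ => sum_nonneg fun _ _ => edgeWeight_nonneg _ _) huS

end EdgeWeight

section RedEdgeWeight

variable {α : Type*} [DecidableEq α] (c : α → α → ℝ) (r : α)

open scoped Classical in
noncomputable def redEdgeWeight (w : List α) : α → α → ℝ :=
  edgeWeight ((range (w.length - 1)).filter fun i => redEdge c r w (i + 1))
    fun i => (w.getD i r, w.getD (i + 1) r)

theorem redEdgeWeight_nonneg (w : List α) (u v : α) : 0 ≤ redEdgeWeight c r w u v :=
  edgeWeight_nonneg u v

theorem redEdgeWeight_comm (w : List α) (u v : α) :
    redEdgeWeight c r w u v = redEdgeWeight c r w v u :=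
  edgeWeight_comm u v

theorem sum_sum_mul_redEdgeWeight_le [Fintype α] (hsymm : ∀ u v, c u v = c v u)
    (htri : ∀ u v w, c u v ≤ c u w + c w v) (hrefl : ∀ u, c u u = 0) {R : ℝ} {w : List α}
    (hw : IsRootedPath r w) (hreg : pathRegret c r w ≤ R) :
    ∑ u, ∑ v, c u v * redEdgeWeight c r w u v ≤ 3 * R := by
  classical
  have hred := sum_redEdge_cost_le c r hsymm htri hrefl hw hreg
  rw [redEdgeWeight, sum_sum_mul_edgeWeight, sum_filter]
  simp only [hsymm (w.getD (_ + 1) r), ← two_mul, ← mul_ite_zero, ← mul_sum]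
  linarith

theorem one_le_sum_sum_compl_redEdgeWeight [Fintype α] {w : List α} {S : Finset α} {v : α}
    (hv : v ∈ w) (hvS : v ∈ S) (hns : ¬redSubpathSubset c r w v S) :
    1 ≤ ∑ u ∈ S, ∑ u' ∈ Sᶜ, redEdgeWeight c r w u u' := by
  classical
  obtain ⟨i, hi, hred, hcross⟩ := exists_redEdge_crossing c r hv hvS hns
  exact one_le_sum_sum_compl_edgeWeight (mem_filter.2 ⟨mem_range.2 hi, hred⟩) hcross

end RedEdgeWeight

open scoped Classical in
theorem one_le_sum_redEdgeWeight_of_active {α : Type*} [Fintype α] [DecidableEq α]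
    (c : α → α → ℝ) (r : α) {m : ℕ} (P : Fin m → List α) {x : Fin m → ℝ} (hx : ∀ i, 0 ≤ x i)
    {S : Finset α} {v : α} (hvS : v ∈ S)
    (hcov : 1 ≤ ∑ i ∈ univ.filter (fun i => v ∈ (P i).tail), x i)
    (hτ : ∑ i ∈ univ.filter (fun i => v ∈ (P i).tail ∧ redSubpathSubset c r (P i) v S), x i
      < 1 / 2) :
    1 ≤ ∑ u ∈ S, ∑ u' ∈ Sᶜ, ∑ i, 2 * x i * redEdgeWeight c r (P i) u u' := by
  set bad := univ.filter fun i => v ∈ (P i).tail ∧ ¬redSubpathSubset c r (P i) v S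
  have hbad : 1 / 2 < ∑ i ∈ bad, x i := by
    have := sum_filter_add_sum_filter_not (univ.filter fun i => v ∈ (P i).tail)
      (fun i => redSubpathSubset c r (P i) v S) x
    rw [filter_filter, filter_filter] at this
    linarith
  have hcross : ∀ i ∈ bad, 1 ≤ ∑ u ∈ S, ∑ u' ∈ Sᶜ, redEdgeWeight c r (P i) u u' := fun i hi =>
    have ⟨hv, hns⟩ := (mem_filter.1 hi).2
    one_le_sum_sum_compl_redEdgeWeight c r (List.mem_of_mem_tail hv) hvS hns
  calc (1 : ℝ) ≤ ∑ i ∈ bad, 2 * x i := by rw [← mul_sum]; linarith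
    _ ≤ ∑ i ∈ bad, 2 * x i * ∑ u ∈ S, ∑ u' ∈ Sᶜ, redEdgeWeight c r (P i) u u' :=
      sum_le_sum fun i hi => le_mul_of_one_le_right (by linarith [hx i]) (hcross i hi)
    _ ≤ ∑ i, 2 * x i * ∑ u ∈ S, ∑ u' ∈ Sᶜ, redEdgeWeight c r (P i) u u' :=
      sum_le_sum_of_subset_of_nonneg (subset_univ _) fun i _ _ =>
        mul_nonneg (by linarith [hx i])
          (sum_nonneg fun _ _ => sum_nonneg fun _ _ => redEdgeWeight_nonneg c r _ _ _)
    _ = _ := by simpa using (sum_sum_mul_sum_comm S Sᶜ (fun _ _ => 1) _ _).symm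

open scoped Classical in
theorem forest_cut_lp_feasible_general {α : Type*} [Fintype α] [DecidableEq α]
    (c : α → α → ℝ) (r : α)
    (hsymm : ∀ u v, c u v = c v u)
    (htri : ∀ u v w, c u v ≤ c u w + c w v) (hrefl : ∀ u, c u u = 0)
    (R : ℝ)
    (m : ℕ) (P : Fin m → List α) (x : Fin m → ℝ)
    (hpath : ∀ i, IsRootedPath r (P i) ∧ pathRegret c r (P i) ≤ R)
    (hx : ∀ i, 0 ≤ x i)
    (hcov : ∀ v, v ≠ r → 1 ≤ ∑ i ∈ Finset.univ.filter (fun i => v ∈ (P i).tail), x i) :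
    ∃ z : α → α → ℝ,
      (∀ u v, 0 ≤ z u v) ∧ (∀ u v, z u v = z v u) ∧
      (∀ S : Finset α, S.Nonempty → r ∉ S →
        (∀ v ∈ S,
          (∑ i ∈ Finset.univ.filter
              (fun i => v ∈ (P i).tail ∧ redSubpathSubset c r (P i) v S), x i) < 1/2) →
        1 ≤ ∑ u ∈ S, ∑ v ∈ Sᶜ, z u v) ∧
      (1/2) * (∑ u, ∑ v, c u v * z u v) ≤ 3 * (∑ i, x i) * R := by
  refine ⟨fun u v => ∑ i, 2 * x i * redEdgeWeight c r (P i) u v,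
    fun u v => sum_nonneg fun i _ =>
      mul_nonneg (by linarith [hx i]) (redEdgeWeight_nonneg c r _ u v),
    fun u v => by simp only [redEdgeWeight_comm c r _ u v], ?_, ?_⟩
  · rintro S ⟨v, hvS⟩ hrS hactive
    exact one_le_sum_redEdgeWeight_of_active c r P hx hvS
      (hcov v (ne_of_mem_of_not_mem hvS hrS)) (hactive v hvS)
  · have hcost : ∀ i, ∑ u, ∑ v, c u v * redEdgeWeight c r (P i) u v ≤ 3 * R := fun i =>
      sum_sum_mul_redEdgeWeight_le c r hsymm htri hrefl (hpath i).1 (hpath i).2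
    calc 1 / 2 * ∑ u, ∑ v, c u v * ∑ i, 2 * x i * redEdgeWeight c r (P i) u v
        = ∑ i, x i * ∑ u, ∑ v, c u v * redEdgeWeight c r (P i) u v := by
          rw [sum_sum_mul_sum_comm, mul_sum]
          exact sum_congr rfl fun i _ => by ring
      _ ≤ ∑ i, x i * (3 * R) := sum_le_sum fun i _ => mul_le_mul_of_nonneg_left (hcost i) (hx i)
      _ = 3 * (∑ i, x i) * R := by rw [← sum_mul]; ring

open scoped Classical in
/-- given a feasible solution `x` of value `k*` to the configuration LP (P) for
RVRP with regret bound `R`, define `τ(v,S) = Σ_{i : v ∈ P i, red(v, P i) ⊆ S} x_i`, and call a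
nonempty set `S ⊆ V` active if `τ(v,S) < 1/2` for every `v ∈ S`.  Then there is a nonnegative
symmetric edge assignment `z` with `Σ_{e ∈ δ(S)} z_e ≥ 1` for every active `S`, and total cost
`Σ_e c_e·z_e ≤ 3·k*·R` (over unordered edges, i.e. half the sum over ordered pairs). -/
theorem forest_cut_lp_feasible {α : Type*} [Fintype α] [DecidableEq α]
    (c : α → α → ℝ) (r : α)
    (hsymm : ∀ u v, c u v = c v u) (hnn : ∀ u v, 0 ≤ c u v)
    (htri : ∀ u v w, c u v ≤ c u w + c w v) (hrefl : ∀ u, c u u = 0)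
    (hpos : ∀ u v, u ≠ v → 0 < c u v)
    (R : ℝ) (hR : 0 ≤ R)
    (m : ℕ) (P : Fin m → List α) (x : Fin m → ℝ)
    (hpath : ∀ i, IsRootedPath r (P i) ∧ pathRegret c r (P i) ≤ R)
    (hx : ∀ i, 0 ≤ x i)
    (hcov : ∀ v, v ≠ r → 1 ≤ ∑ i ∈ Finset.univ.filter (fun i => v ∈ (P i).tail), x i) :
    ∃ z : α → α → ℝ,
      (∀ u v, 0 ≤ z u v) ∧ (∀ u v, z u v = z v u) ∧
      (∀ S : Finset α, S.Nonempty → r ∉ S →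
        (∀ v ∈ S,
          (∑ i ∈ Finset.univ.filter
              (fun i => v ∈ (P i).tail ∧ redSubpathSubset c r (P i) v S), x i) < 1/2) →
        1 ≤ ∑ u ∈ S, ∑ v ∈ Sᶜ, z u v) ∧
      (1/2) * (∑ u, ∑ v, c u v * z u v) ≤ 3 * (∑ i, x i) * R :=
  forest_cut_lp_feasible_general c r hsymm htri hrefl R m P x hpath hx hcov
end

section
/- Let S ⊆ V, let ρ > 0, and suppose there exist k rooted paths such that every node of S lies on one of them with additive regret at most ρ with respect to that path. Then for every ε > 0 there exist at most k·⌈1/ε⌉ rooted paths, each of regret at most ε·ρ, whose union covers S. -/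
/-- The distance travelled along `w` from its first node until first reaching `v`. -/
def prefixCost {α : Type*} [DecidableEq α] (c : α → α → ℝ) (w : List α) (v : α) : ℝ :=
  pathCost c (w.take (w.idxOf v + 1))

/-- The (additive) regret of node `v` with respect to the rooted path `w`. -/
def nodeRegret {α : Type*} [DecidableEq α] (c : α → α → ℝ) (r : α) (w : List α) (v : α) : ℝ :=
  prefixCost c w v - c r v

/-!
Split the regret range `[0, ρ]` of each given path into `⌈1/ε⌉` bands of width `ερ`. Shortcutting
a path `P` to the nodes whose regret lies in one band gives a rooted path `r, u, …, v` of cost at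
most `c(r,u) + (c_P(v) − c_P(u))` by the triangle inequality, so its regret is at most
`regret(v) − regret(u) ≤ ερ`.
-/

section ShortcutBands

open List

variable {α : Type*}

section PathCost

variable (c : α → α → ℝ)

@[simp]
lemma pathCost_singleton (a : α) : pathCost c [a] = 0 := rfl

@[simp]
lemma pathCost_cons_cons (a b : α) (l : List α) :
    pathCost c (a :: b :: l) = c a b + pathCost c (b :: l) := rfl

variable [DecidableEq α]

@[simp]
lemma prefixCost_cons_self (a : α) (l : List α) : prefixCost c (a :: l) a = 0 := by
  simp [prefixCost]

lemma prefixCost_cons_cons_of_ne {a v : α} (hv : v ≠ a) (b : α) (l : List α) :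
    prefixCost c (a :: b :: l) v = c a b + prefixCost c (b :: l) v := by
  unfold prefixCost
  rw [idxOf_cons_ne _ hv.symm]
  rfl

variable {c} (htri : ∀ u v w, c u v ≤ c u w + c w v)
include htri

lemma le_prefixCost_cons {a b : α} {l : List α} (hb : b ∈ l) (hba : b ≠ a) :
    c a b ≤ prefixCost c (a :: l) b := by
  induction l generalizing a with
  | nil => simp at hb
  | cons x l ih =>
    rw [prefixCost_cons_cons_of_ne c hba]
    by_cases hbx : b = x
    · subst hbx
      simp
    · linarith [htri a b x, ih (mem_of_ne_of_mem hbx hb) hbx]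

lemma add_prefixCost_le_prefixCost {a b : α} {w : List α} (hab : [a, b] <+ w) (hw : w.Nodup) :
    c a b + prefixCost c w a ≤ prefixCost c w b := by
  induction w with
  | nil => cases hab
  | cons x w ih =>
    obtain ⟨hx, hw⟩ := nodup_cons.mp hw
    cases hab with
    | cons _ hab =>
      have ha : a ∈ w := hab.subset (by simp)
      have hb : b ∈ w := hab.subset (by simp)
      cases w with
      | nil => simp at ha
      | cons y w =>
        rw [prefixCost_cons_cons_of_ne c (ne_of_mem_of_not_mem ha hx),
          prefixCost_cons_cons_of_ne c (ne_of_mem_of_not_mem hb hx)]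
        linarith [ih hab hw]
    | cons_cons _ hab =>
      have hb : b ∈ w := singleton_sublist.mp hab
      simpa using le_prefixCost_cons htri hb (ne_of_mem_of_not_mem hb hx)

/-- Shortcutting `w` to a sublist does not increase the cost between its endpoints. -/
lemma pathCost_add_prefixCost_le {a : α} {L w : List α} (hL : a :: L <+ w) (hw : w.Nodup) :
    pathCost c (a :: L) + prefixCost c w a ≤ prefixCost c w (L.getLastD a) := by
  induction L generalizing a with
  | nil => simp
  | cons b L ih =>
    have hab : [a, b] <+ w := (by simp : [a, b] <+ a :: b :: L).trans hL
    rw [pathCost_cons_cons, getLastD_cons]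
    linarith [add_prefixCost_le_prefixCost htri hab hw, ih ((sublist_cons_self a _).trans hL)]

end PathCost

namespace IsRootedPath

variable {r : α} {w : List α}

lemma exists_eq_cons (hw : IsRootedPath r w) : ∃ t, w = r :: t :=
  head?_eq_some_iff.mp hw.1

lemma cons_of_sublist_tail {L : List α} (hw : IsRootedPath r w) (hL : L <+ w.tail) :
    IsRootedPath r (r :: L) := by
  obtain ⟨t, rfl⟩ := hw.exists_eq_cons
  exact ⟨rfl, (hL.cons_cons r).nodup hw.2⟩

end IsRootedPath

section Regret

variable [DecidableEq α] {c : α → α → ℝ} {r : α} {w : List α}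
  (htri : ∀ u v w, c u v ≤ c u w + c w v)
include htri

lemma nodeRegret_nonneg {v : α} (hw : IsRootedPath r w) (hv : v ∈ w.tail) :
    0 ≤ nodeRegret c r w v := by
  obtain ⟨t, rfl⟩ := hw.exists_eq_cons
  have hvr : v ≠ r := ne_of_mem_of_not_mem hv (nodup_cons.mp hw.2).1
  exact sub_nonneg.mpr (le_prefixCost_cons htri hv hvr)

lemma pathRegret_cons_le_of_sublist_tail {L : List α} {δ : ℝ} (hw : IsRootedPath r w)
    (hL : L <+ w.tail) (hδ : 0 ≤ δ)
    (hspread : ∀ u ∈ L, ∀ v ∈ L, nodeRegret c r w u - nodeRegret c r w v ≤ δ) :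
    pathRegret c r (r :: L) ≤ δ := by
  obtain ⟨t, rfl⟩ := hw.exists_eq_cons
  cases L with
  | nil =>
    simp only [pathRegret, pathCost_singleton, getLastD_cons, getLastD_nil]
    linarith [htri r r r]
  | cons a L =>
    have hshort := pathCost_add_prefixCost_le htri (hL.trans (sublist_cons_self r t)) hw.2
    have hab := hspread _ getLastD_mem_cons a mem_cons_self
    simp only [pathRegret, nodeRegret, pathCost_cons_cons, getLastD_cons] at hab ⊢
    linarith

end Regret

noncomputable def regretBand [DecidableEq α] (c : α → α → ℝ) (r : α) (w : List α) (δ : ℝ)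
    (t : ℕ) : List α :=
  w.tail.filter fun v => t * δ ≤ nodeRegret c r w v ∧ nodeRegret c r w v ≤ (t + 1) * δ

section RegretBand

variable [DecidableEq α] {c : α → α → ℝ} {r : α} {w : List α} {δ : ℝ} {t : ℕ}

lemma mem_regretBand {v : α} :
    v ∈ regretBand c r w δ t ↔
      v ∈ w.tail ∧ t * δ ≤ nodeRegret c r w v ∧ nodeRegret c r w v ≤ (t + 1) * δ := by
  simp [regretBand]

lemma regretBand_sublist_tail : regretBand c r w δ t <+ w.tail := filter_sublist

lemma pathRegret_cons_regretBand_le (htri : ∀ u v w, c u v ≤ c u w + c w v)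
    (hw : IsRootedPath r w) (hδ : 0 ≤ δ) : pathRegret c r (r :: regretBand c r w δ t) ≤ δ := by
  refine pathRegret_cons_le_of_sublist_tail htri hw regretBand_sublist_tail hδ ?_
  intro u hu v hv
  rw [mem_regretBand] at hu hv
  linarith [hu.2.2, hv.2.1]

end RegretBand

lemma exists_lt_mul_le_le_succ_mul {x δ : ℝ} {N : ℕ} (hδ : 0 < δ) (hN : 0 < N) (hx : 0 ≤ x)
    (hxN : x ≤ N * δ) : ∃ t < N, t * δ ≤ x ∧ x ≤ (t + 1) * δ := by
  have hfloor : (⌊x / δ⌋₊ : ℝ) * δ ≤ x := (le_div_iff₀ hδ).mp (Nat.floor_le (div_nonneg hx hδ.le))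
  rcases lt_or_ge ⌊x / δ⌋₊ N with h | h
  · exact ⟨_, h, hfloor, ((div_lt_iff₀ hδ).mp (Nat.lt_floor_add_one _)).le⟩
  · refine ⟨N - 1, by omega, ?_, by rwa [Nat.cast_pred hN, sub_add_cancel]⟩
    have : ((N - 1 : ℕ) : ℝ) ≤ ⌊x / δ⌋₊ := by exact_mod_cast (by omega : N - 1 ≤ ⌊x / δ⌋₊)
    nlinarith

end ShortcutBands

theorem covering_with_scaled_regret_general {α : Type*} [DecidableEq α]
    (c : α → α → ℝ) (r : α)
    (htri : ∀ u v w, c u v ≤ c u w + c w v)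
    (S : Set α)
    (ρ : ℝ) (hρ : 0 < ρ) (k : ℕ)
    (P : Fin k → List α) (hP : ∀ i, IsRootedPath r (P i))
    (hcov : ∀ v ∈ S, ∃ i, v ∈ (P i).tail ∧ nodeRegret c r (P i) v ≤ ρ)
    (ε : ℝ) (hε : 0 < ε) :
    ∃ (n : ℕ) (Q : Fin n → List α),
      n ≤ k * ⌈1/ε⌉₊ ∧
      (∀ j, IsRootedPath r (Q j) ∧ pathRegret c r (Q j) ≤ ε * ρ) ∧
      (∀ v ∈ S, ∃ j, v ∈ (Q j).tail) := by
  set N := ⌈1/ε⌉₊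
  have hN : 0 < N := Nat.ceil_pos.mpr (by positivity)
  have hρN : ρ ≤ N * (ε * ρ) := by
    have : 1 ≤ N * ε := by rw [← div_le_iff₀ hε]; exact Nat.le_ceil _
    nlinarith
  refine ⟨k * N, fun j => r :: regretBand c r (P (finProdFinEquiv.symm j).1) (ε * ρ)
    (finProdFinEquiv.symm j).2, le_rfl, fun j => ⟨?_, ?_⟩, ?_⟩
  · exact (hP _).cons_of_sublist_tail regretBand_sublist_tail
  · exact pathRegret_cons_regretBand_le htri (hP _) (by positivity)
  intro v hv
  obtain ⟨i, hvi, hvρ⟩ := hcov v hv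
  obtain ⟨t, htN, hband⟩ :=
    exists_lt_mul_le_le_succ_mul (by positivity) hN (nodeRegret_nonneg htri (hP i) hvi)
      (hvρ.trans hρN)
  exact ⟨finProdFinEquiv (i, ⟨t, htN⟩), by simpa [mem_regretBand] using ⟨hvi, hband⟩⟩

/-- if `k` rooted paths cover every node of `S ⊆ V` with additive regret at most
`ρ > 0`, then for every `ε > 0` there are at most `k·⌈1/ε⌉` rooted paths, each of regret at
most `ε·ρ`, whose union covers `S`. -/
theorem covering_with_scaled_regret {α : Type*} [Fintype α] [DecidableEq α]
    (c : α → α → ℝ) (r : α)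
    (hsymm : ∀ u v, c u v = c v u) (hnn : ∀ u v, 0 ≤ c u v)
    (htri : ∀ u v w, c u v ≤ c u w + c w v) (hrefl : ∀ u, c u u = 0)
    (hpos : ∀ u v, u ≠ v → 0 < c u v)
    (S : Set α) (hSr : r ∉ S)
    (ρ : ℝ) (hρ : 0 < ρ) (k : ℕ)
    (P : Fin k → List α) (hP : ∀ i, IsRootedPath r (P i))
    (hcov : ∀ v ∈ S, ∃ i, v ∈ (P i).tail ∧ nodeRegret c r (P i) v ≤ ρ)
    (ε : ℝ) (hε : 0 < ε) :
    ∃ (n : ℕ) (Q : Fin n → List α),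
      n ≤ k * ⌈1/ε⌉₊ ∧
      (∀ j, IsRootedPath r (Q j) ∧ pathRegret c r (Q j) ≤ ε * ρ) ∧
      (∀ v ∈ S, ∃ j, v ∈ (Q j).tail) :=
  covering_with_scaled_regret_general c r htri S ρ hρ k P hP hcov ε hε
end

section
/- Consider the shortest-path metric of a single ladder graph L_h rooted at r. Then: (a) every rooted path covering all 2(2h−1) non-root nodes of L_h has regret at least 2h−1; (b) for each i ∈ {1, …, 2h−1}, the rooted path P_i — defined as r, u_1, …, u_i, v_i, v_{i+1}, …, v_{2h−1} if i is odd, and r, v_1, …, v_i, u_i, u_{i+1}, …, u_{2h−1} if i is even — has regret exactly 1, and every non-root node of L_h lies on exactly h of the paths P_1, …, P_{2h−1}. -/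
/-- Extended-real cost of a walk, given edge weights `g` (with `⊤` for non-edges). -/
noncomputable def walkCostE {β : Type*} (g : β → β → ENNReal) : List β → ENNReal
  | [] => 0
  | [_] => 0
  | a :: b :: l => g a b + walkCostE g (b :: l)

/-- Shortest-path distance induced by edge weights `g`. -/
noncomputable def spDist {β : Type*} (g : β → β → ENNReal) (u v : β) : ℝ :=
  (⨅ l ∈ {l : List β | l.head? = some u ∧ l.getLast? = some v}, walkCostE g l).toReal

/-- Nodes of `copies` disjoint copies of the ladder graph `L_h` sharing a common root:
`Sum.inl ()` is the root `r`; `Sum.inr (j, i, b)` is `u_{i+1}` (if `b = true`) or `v_{i+1}`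
(if `b = false`) of copy `j`. -/
abbrev LadderNode (h copies : ℕ) := Unit ⊕ (Fin copies × Fin (2 * h - 1) × Bool)

/-- Edge weights of `copies` disjoint copies of the ladder graph `L_h` sharing the root:
"vertical" edges `(u_i,u_{i+1})`, `(v_i,v_{i+1})` (within one copy, with `u_0 = v_0 = r`)
cost `h`, "rung" edges `(u_i,v_i)` cost `1`, everything else is a non-edge (`⊤`). -/
noncomputable def ladderEdges (h copies : ℕ) :
    LadderNode h copies → LadderNode h copies → ENNReal
  | Sum.inl _, Sum.inl _ => ⊤
  | Sum.inl _, Sum.inr (_, i, _) => if (i : ℕ) = 0 then (h : ENNReal) else ⊤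
  | Sum.inr (_, i, _), Sum.inl _ => if (i : ℕ) = 0 then (h : ENNReal) else ⊤
  | Sum.inr (j, i, b), Sum.inr (j', i', b') =>
      if j = j' ∧ b = b' ∧ ((i : ℕ) + 1 = (i' : ℕ) ∨ (i' : ℕ) + 1 = (i : ℕ)) then (h : ENNReal)
      else if j = j' ∧ i = i' ∧ b ≠ b' then 1 else ⊤

/-- The shortest-path metric of `copies` disjoint copies of `L_h` sharing the root. -/
noncomputable def ladderMetric (h copies : ℕ) :
    LadderNode h copies → LadderNode h copies → ℝ :=
  spDist (ladderEdges h copies)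

/-- The node `u_{t+1}` (if `b = true`) resp. `v_{t+1}` (if `b = false`) of a single
ladder `L_h` (so `t` is a 0-based index). -/
def ladNode (h : ℕ) (t : ℕ) (b : Bool) : LadderNode h 1 :=
  if ht : t < 2 * h - 1 then Sum.inr (0, ⟨t, ht⟩, b) else Sum.inl ()

/-- The path `P_i` (for `1 ≤ i ≤ 2h−1`):
`r, u_1, …, u_i, v_i, v_{i+1}, …, v_{2h−1}` if `i` is odd, and
`r, v_1, …, v_i, u_i, u_{i+1}, …, u_{2h−1}` if `i` is even. -/
def ladderPath (h i : ℕ) : List (LadderNode h 1) :=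
  Sum.inl () ::
    (if i % 2 = 1 then
      ((List.range i).map fun t => ladNode h t true)
        ++ ((List.range' (i - 1) (2 * h - i)).map fun t => ladNode h t false)
    else
      ((List.range i).map fun t => ladNode h t false)
        ++ ((List.range' (i - 1) (2 * h - i)).map fun t => ladNode h t true))

/-- Decidability of list membership from decidable equality (helper instance). -/
instance listDecidableMem {γ : Type*} [DecidableEq γ] (v : γ) (l : List γ) :
    Decidable (v ∈ l) :=
  List.rec (.isFalse (by simp))
    (fun a l ih => decidable_of_iff (v = a ∨ v ∈ l) (by simp [eq_comm])) l

/-! The shortest-path metric of `L_h` is `ladderDist`: `|row x - row y| * h`, plus one rung when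
`x` and `y` are off the root on different sides; a detour through the root instead of a rung costs
at least `2h` extra. With `D = d(r, ·) = row * h`, the regret of a rooted path is the sum of its
step regrets `d(x, y) - (D y - D x) ≥ 0`.

(a) A step towards the root has regret at least `2h`. Otherwise rows never decrease along the path,
so between its visits of `u_s` and `v_s` it stays in row `s` and crosses the rung there, a step of
regret at least `1`, for each of the `2h - 1` rows.

(b) `P_i` climbs one side (regret `0` per step), crosses the rung of row `i` (regret `1`) and climbs
the other side.

(c) `u_t` lies on `P_i` iff `t ≤ i` for odd `i` and `i ≤ t` for even `i`, hence on exactly one of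
`P_{2j+1}, P_{2j+2}` for each `j < h`; symmetrically `v_t` lies on exactly one of `P_{2j}, P_{2j+1}`.
-/

open Finset
open scoped ENNReal

section PathRegret

variable {α : Type*} (c : α → α → ℝ)

lemma pathCost_eq_sum (d : α) : ∀ w : List α,
    pathCost c w = ∑ k ∈ range (w.length - 1), c (w.getD k d) (w.getD (k + 1) d)
  | [] => by simp [pathCost]
  | [_] => by simp [pathCost]
  | a :: b :: l => by
    rw [pathCost, pathCost_eq_sum d (b :: l)]
    simp [sum_range_succ', add_comm]

def stepRegret (r x y : α) : ℝ :=
  c x y - (c r y - c r x)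

lemma pathRegret_eq_sum_stepRegret {r : α} (hr : c r r = 0) {w : List α}
    (hw : w.head? = some r) :
    pathRegret c r w =
      ∑ k ∈ range (w.length - 1), stepRegret c r (w.getD k r) (w.getD (k + 1) r) := by
  obtain ⟨l, rfl⟩ := List.head?_eq_some_iff.1 hw
  have hlast : (r :: l).getLastD r = (r :: l).getD l.length r := by
    rw [List.getLastD_eq_getLast?, List.getLast?_eq_getElem?]
    simp
  simp only [pathRegret, stepRegret, pathCost_eq_sum c r, sum_sub_distrib,
    sum_range_sub (fun k => c r ((r :: l).getD k r)), hlast]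
  simp [hr]

end PathRegret

section WalkDist

variable {β : Type*} (g : β → β → ℝ≥0∞)

noncomputable def walkDist (u v : β) : ℝ≥0∞ :=
  ⨅ l ∈ {l : List β | l.head? = some u ∧ l.getLast? = some v}, walkCostE g l

lemma walkCostE_append_cons (l₁ : List β) (x : β) (l₂ : List β) :
    walkCostE g (l₁ ++ x :: l₂) = walkCostE g (l₁ ++ [x]) + walkCostE g (x :: l₂) := by
  induction l₁ with
  | nil => simp [walkCostE]
  | cons a t ih =>
    cases t with
    | nil => simp [walkCostE]
    | cons b t => simp only [List.cons_append, walkCostE] at ih ⊢; rw [ih, add_assoc]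

lemma walkCostE_reverse (hg : ∀ x y, g x y = g y x) : ∀ l : List β,
    walkCostE g l.reverse = walkCostE g l
  | [] => rfl
  | [_] => rfl
  | a :: b :: l => by
    rw [List.reverse_cons, List.reverse_cons, List.append_assoc, List.singleton_append,
      walkCostE_append_cons, ← List.reverse_cons, walkCostE_reverse hg (b :: l)]
    simp [walkCostE, hg b a, add_comm]

variable {g}

lemma walkDist_le {l : List β} {u v : β} (hu : l.head? = some u) (hv : l.getLast? = some v) :
    walkDist g u v ≤ walkCostE g l :=
  iInf₂_le l ⟨hu, hv⟩

variable (g)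

lemma walkDist_self (u : β) : walkDist g u u = 0 :=
  nonpos_iff_eq_zero.1 ((walkDist_le (l := [u]) rfl rfl).trans_eq rfl)

lemma walkDist_le_edge (u v : β) : walkDist g u v ≤ g u v :=
  (walkDist_le (l := [u, v]) rfl rfl).trans_eq (by simp [walkCostE])

lemma walkDist_triangle (u v w : β) : walkDist g u w ≤ walkDist g u v + walkDist g v w := by
  refine ENNReal.le_iInf₂_add_iInf₂ ?_
  rintro l₁ ⟨hu, hv₁⟩ l₂ ⟨hv₂, hw⟩
  obtain ⟨l₁, rfl⟩ := List.getLast?_eq_some_iff.1 hv₁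
  obtain ⟨l₂, rfl⟩ := List.head?_eq_some_iff.1 hv₂
  rw [← walkCostE_append_cons]
  refine walkDist_le ?_ ?_
  · cases l₁ <;> simpa using hu
  · cases l₂ <;> simp_all

lemma walkDist_comm (hg : ∀ x y, g x y = g y x) (u v : β) : walkDist g u v = walkDist g v u := by
  suffices ∀ u v, walkDist g u v ≤ walkDist g v u from le_antisymm (this u v) (this v u)
  refine fun u v => le_iInf₂ fun l ⟨hv, hu⟩ => ?_
  exact (walkDist_le (by simpa using hu) (by simpa using hv)).trans_eq (walkCostE_reverse g hg l)

lemma walkDist_le_of_chain (f : ℕ → β) {a : ℝ≥0∞} {m : ℕ}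
    (hf : ∀ k < m, g (f k) (f (k + 1)) ≤ a) {s t : ℕ} (hst : s ≤ t) (htm : t ≤ m) :
    walkDist g (f s) (f t) ≤ (t - s : ℕ) * a := by
  induction t, hst using Nat.le_induction with
  | base => simp [walkDist_self]
  | succ t hst ih =>
    calc walkDist g (f s) (f (t + 1))
        ≤ walkDist g (f s) (f t) + walkDist g (f t) (f (t + 1)) := walkDist_triangle g _ _ _
      _ ≤ (t - s : ℕ) * a + a :=
          add_le_add (ih (by omega)) ((walkDist_le_edge g _ _).trans (hf t (by omega)))
      _ = (t + 1 - s : ℕ) * a := by rw [Nat.sub_add_comm hst]; push_cast; ring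

lemma le_walkCostE {d : β → β → ℝ≥0∞} (hself : ∀ x, d x x = 0)
    (htri : ∀ x y z, d x z ≤ d x y + d y z) (hle : ∀ x y, d x y ≤ g x y) :
    ∀ (l : List β) (u v : β), l.head? = some u → l.getLast? = some v → d u v ≤ walkCostE g l
  | [], _, _, hu, _ => by simp at hu
  | [_], _, _, hu, hv => by simp_all
  | a :: b :: l, u, v, hu, hv => by
    obtain rfl : a = u := by simpa using hu
    calc d a v ≤ d a b + d b v := htri a b v
      _ ≤ g a b + walkCostE g (b :: l) :=
          add_le_add (hle a b) (le_walkCostE hself htri hle (b :: l) b v rfl (by simpa using hv))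
      _ = walkCostE g (a :: b :: l) := rfl

lemma le_walkDist {d : β → β → ℝ≥0∞} (hself : ∀ x, d x x = 0)
    (htri : ∀ x y z, d x z ≤ d x y + d y z) (hle : ∀ x y, d x y ≤ g x y) (u v : β) :
    d u v ≤ walkDist g u v :=
  le_iInf₂ fun l ⟨hu, hv⟩ => le_walkCostE g hself htri hle l u v hu hv

end WalkDist

lemma ladNode_of_lt {h t : ℕ} (ht : t < 2 * h - 1) (b : Bool) :
    ladNode h t b = .inr (0, ⟨t, ht⟩, b) :=
  dif_pos ht

namespace LadderNode

variable {h : ℕ}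

def row : LadderNode h 1 → ℕ
  | .inl _ => 0
  | .inr (_, i, _) => i + 1

def side : LadderNode h 1 → Bool
  | .inl _ => true
  | .inr (_, _, b) => b

def ofRow (h : ℕ) : ℕ → Bool → LadderNode h 1
  | 0, _ => .inl ()
  | t + 1, b => ladNode h t b

lemma row_le (x : LadderNode h 1) : x.row ≤ 2 * h - 1 := by
  rcases x with _ | ⟨_, i, _⟩ <;> simp only [row] <;> omega

lemma row_ofRow {t : ℕ} (ht : t ≤ 2 * h - 1) (b : Bool) : (ofRow h t b).row = t := by
  cases t with
  | zero => rfl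
  | succ t => simp [ofRow, ladNode_of_lt (show t < 2 * h - 1 by omega), row]

lemma side_ofRow {t : ℕ} (h0 : t ≠ 0) (ht : t ≤ 2 * h - 1) (b : Bool) :
    (ofRow h t b).side = b := by
  obtain ⟨t, rfl⟩ := Nat.exists_eq_succ_of_ne_zero h0
  simp [ofRow, ladNode_of_lt (show t < 2 * h - 1 by omega), side]

lemma ofRow_row_side (x : LadderNode h 1) : ofRow h x.row x.side = x := by
  rcases x with _ | ⟨j, i, b⟩
  · rfl
  · simp [row, side, ofRow, ladNode, Subsingleton.elim j 0]

lemma exists_eq_ofRow (x : LadderNode h 1) : ∃ t ≤ 2 * h - 1, ∃ b, ofRow h t b = x :=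
  ⟨x.row, x.row_le, x.side, x.ofRow_row_side⟩

lemma ofRow_eq_ofRow_iff {s t : ℕ} (hs : s ≤ 2 * h - 1) (ht : t ≤ 2 * h - 1) {b b' : Bool} :
    ofRow h s b = ofRow h t b' ↔ s = t ∧ (s = 0 ∨ b = b') := by
  constructor
  · intro heq
    have hrow := congrArg row heq
    rw [row_ofRow hs, row_ofRow ht] at hrow
    refine ⟨hrow, or_iff_not_imp_left.2 fun h0 => ?_⟩
    simpa [side_ofRow h0 hs, side_ofRow (hrow ▸ h0) ht] using congrArg side heq
  · rintro ⟨rfl, rfl | rfl⟩ <;> rfl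

lemma ofRow_ne_root {s : ℕ} (hs0 : s ≠ 0) (hs : s ≤ 2 * h - 1) (b : Bool) :
    ofRow h s b ≠ .inl () :=
  fun heq => hs0 (by rw [← row_ofRow hs b, heq]; rfl)

end LadderNode

open LadderNode

def ladderDist (h : ℕ) (x y : LadderNode h 1) : ℕ :=
  Nat.dist x.row y.row * h + if x.row ≠ 0 ∧ y.row ≠ 0 ∧ x.side ≠ y.side then 1 else 0

lemma ladderDist_self {h : ℕ} (x : LadderNode h 1) : ladderDist h x x = 0 := by
  simp [ladderDist]

lemma ladderDist_ofRow {h s t : ℕ} (hs : s ≤ 2 * h - 1) (ht : t ≤ 2 * h - 1) (b b' : Bool) :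
    ladderDist h (ofRow h s b) (ofRow h t b') =
      Nat.dist s t * h + if s ≠ 0 ∧ t ≠ 0 ∧ b ≠ b' then 1 else 0 := by
  rw [ladderDist, row_ofRow hs, row_ofRow ht]
  by_cases hs0 : s = 0
  · simp [hs0]
  by_cases ht0 : t = 0
  · simp [ht0]
  simp [side_ofRow hs0 hs, side_ofRow ht0 ht, hs0, ht0]

lemma ladderDist_triangle {h : ℕ} (x y z : LadderNode h 1) :
    ladderDist h x z ≤ ladderDist h x y + ladderDist h y z := by
  have hrows := Nat.dist.triangle_inequality x.row y.row z.row
  by_cases hy : y.row = 0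
  · -- the detour through the root costs at least `2h ≥ 1` more than the rows alone
    have hx := x.row_le
    simp only [ladderDist, hy, ne_eq, not_true_eq_false, false_and, and_false, if_false,
      add_zero]
    rw [hy] at hrows
    split_ifs with hxz
    · have : (Nat.dist x.row z.row + 2) * h ≤ (Nat.dist x.row 0 + Nat.dist 0 z.row) * h :=
        Nat.mul_le_mul_right h (by simp only [Nat.dist]; omega)
      have : 1 ≤ h := by omega
      nlinarith
    · nlinarith [Nat.mul_le_mul_right h hrows]
  · have hside : (if x.row ≠ 0 ∧ z.row ≠ 0 ∧ x.side ≠ z.side then 1 else 0) ≤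
        (if x.row ≠ 0 ∧ y.row ≠ 0 ∧ x.side ≠ y.side then 1 else 0) +
        (if y.row ≠ 0 ∧ z.row ≠ 0 ∧ y.side ≠ z.side then 1 else 0) := by
      cases x.side <;> cases y.side <;> cases z.side <;> split_ifs <;> simp_all
    simp only [ladderDist]
    nlinarith [Nat.mul_le_mul_right h hrows]

lemma ladderEdges_comm (h copies : ℕ) (x y : LadderNode h copies) :
    ladderEdges h copies x y = ladderEdges h copies y x := by
  rcases x with _ | ⟨j, i, b⟩ <;> rcases y with _ | ⟨j', i', b'⟩ <;>
    simp only [ladderEdges, eq_comm, or_comm, ne_comm]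

lemma ladderDist_le_ladderEdges {h : ℕ} (x y : LadderNode h 1) :
    (ladderDist h x y : ℝ≥0∞) ≤ ladderEdges h 1 x y := by
  rcases x with _ | ⟨j, i, b⟩ <;> rcases y with _ | ⟨j', i', b'⟩ <;> simp only [ladderEdges] <;>
    (try split_ifs) <;> (try exact le_top) <;> norm_cast <;>
    simp_all [ladderDist, row, side, Nat.dist]
  exact (Nat.mul_le_mul_right h (by omega : _ ≤ 1)).trans_eq (one_mul h)

lemma ladderEdges_ofRow_succ {h t : ℕ} (ht : t + 1 ≤ 2 * h - 1) (b : Bool) :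
    ladderEdges h 1 (ofRow h t b) (ofRow h (t + 1) b) = h := by
  rcases t with _ | t
  · simp [ofRow, ladNode_of_lt (show 0 < 2 * h - 1 by omega), ladderEdges]
  · simp [ofRow, ladNode_of_lt (show t < 2 * h - 1 by omega),
      ladNode_of_lt (show t + 1 < 2 * h - 1 by omega), ladderEdges]

lemma ladderEdges_ofRow_rung {h t : ℕ} (h0 : t ≠ 0) (ht : t ≤ 2 * h - 1) {b b' : Bool}
    (hb : b ≠ b') : ladderEdges h 1 (ofRow h t b) (ofRow h t b') = 1 := by
  obtain ⟨t, rfl⟩ := Nat.exists_eq_succ_of_ne_zero h0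
  simp [ofRow, ladNode_of_lt (show t < 2 * h - 1 by omega), ladderEdges, hb]

lemma walkDist_ladderEdges_ofRow_le {h s t : ℕ} (hs : s ≤ 2 * h - 1) (ht : t ≤ 2 * h - 1)
    (b : Bool) : walkDist (ladderEdges h 1) (ofRow h s b) (ofRow h t b) ≤ Nat.dist s t * h := by
  wlog hst : s ≤ t generalizing s t
  · rw [walkDist_comm _ (ladderEdges_comm h 1), Nat.dist_comm]
    exact this ht hs (by omega)
  rw [show Nat.dist s t = t - s by simp only [Nat.dist]; omega]
  exact walkDist_le_of_chain _ (ofRow h · b)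
    (fun k hk => (ladderEdges_ofRow_succ (by omega) b).le) hst ht

lemma walkDist_ladderEdges_le {h : ℕ} (x y : LadderNode h 1) :
    walkDist (ladderEdges h 1) x y ≤ ladderDist h x y := by
  obtain ⟨s, hs, b, rfl⟩ := x.exists_eq_ofRow
  obtain ⟨t, ht, b', rfl⟩ := y.exists_eq_ofRow
  rw [ladderDist_ofRow hs ht]
  split_ifs with hcross
  · obtain ⟨-, ht0, hb⟩ := hcross
    calc walkDist (ladderEdges h 1) (ofRow h s b) (ofRow h t b')
        ≤ walkDist (ladderEdges h 1) (ofRow h s b) (ofRow h t b) +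
            walkDist (ladderEdges h 1) (ofRow h t b) (ofRow h t b') := walkDist_triangle _ _ _ _
      _ ≤ Nat.dist s t * h + 1 :=
          add_le_add (walkDist_ladderEdges_ofRow_le hs ht b)
            ((walkDist_le_edge _ _ _).trans (ladderEdges_ofRow_rung ht0 ht hb).le)
      _ = _ := by push_cast; rfl
  · -- with no rung to cross, both nodes lie on a common side
    obtain ⟨b₀, hsb, htb⟩ : ∃ b₀, ofRow h s b = ofRow h s b₀ ∧ ofRow h t b' = ofRow h t b₀ := by
      by_cases hs0 : s = 0
      · exact ⟨b', by subst hs0; rfl, rfl⟩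
      by_cases ht0 : t = 0
      · exact ⟨b, rfl, by subst ht0; rfl⟩
      exact ⟨b, rfl, by simp_all⟩
    rw [hsb, htb, add_zero]
    exact_mod_cast walkDist_ladderEdges_ofRow_le hs ht b₀

lemma ladderMetric_eq_ladderDist {h : ℕ} (x y : LadderNode h 1) :
    ladderMetric h 1 x y = ladderDist h x y := by
  have hwalk : walkDist (ladderEdges h 1) x y = ladderDist h x y :=
    le_antisymm (walkDist_ladderEdges_le x y)
      (le_walkDist _ (d := fun x y => ladderDist h x y) (by simp [ladderDist_self])
        (fun x y z => by exact_mod_cast ladderDist_triangle x y z) ladderDist_le_ladderEdges x y)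
  rw [ladderMetric, spDist, ← walkDist, hwalk, ENNReal.toReal_natCast]

lemma ladderMetric_root_left {h : ℕ} (x : LadderNode h 1) :
    ladderMetric h 1 (.inl ()) x = x.row * h := by
  simp [ladderMetric_eq_ladderDist, ladderDist, row, Nat.dist]

lemma stepRegret_ladderMetric {h : ℕ} (x y : LadderNode h 1) :
    stepRegret (ladderMetric h 1) (.inl ()) x y = ladderDist h x y + x.row * h - y.row * h := by
  rw [stepRegret, ladderMetric_root_left, ladderMetric_root_left, ladderMetric_eq_ladderDist]
  ring

lemma stepRegret_ladderMetric_nonneg {h : ℕ} (x y : LadderNode h 1) :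
    0 ≤ stepRegret (ladderMetric h 1) (.inl ()) x y := by
  have hrow : y.row ≤ Nat.dist x.row y.row + x.row := by simp only [Nat.dist]; omega
  have : y.row * h ≤ ladderDist h x y + x.row * h := by
    have : Nat.dist x.row y.row * h ≤ ladderDist h x y := Nat.le_add_right _ _
    nlinarith [Nat.mul_le_mul_right h hrow]
  rw [stepRegret_ladderMetric, sub_nonneg]
  exact_mod_cast this

lemma two_mul_le_stepRegret_ladderMetric {h : ℕ} {x y : LadderNode h 1} (hxy : y.row < x.row) :
    2 * (h : ℝ) ≤ stepRegret (ladderMetric h 1) (.inl ()) x y := by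
  have hrow : y.row + 2 ≤ Nat.dist x.row y.row + x.row := by simp only [Nat.dist]; omega
  have : y.row * h + 2 * h ≤ ladderDist h x y + x.row * h := by
    have : Nat.dist x.row y.row * h ≤ ladderDist h x y := Nat.le_add_right _ _
    nlinarith [Nat.mul_le_mul_right h hrow]
  rw [stepRegret_ladderMetric, le_sub_iff_add_le']
  exact_mod_cast this

lemma one_le_stepRegret_ladderMetric {h : ℕ} {x y : LadderNode h 1} (hx : x.row ≠ 0)
    (hy : y.row ≠ 0) (hxy : x.side ≠ y.side) :
    1 ≤ stepRegret (ladderMetric h 1) (.inl ()) x y := by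
  have hrow : y.row ≤ Nat.dist x.row y.row + x.row := by simp only [Nat.dist]; omega
  have : y.row * h + 1 ≤ ladderDist h x y + x.row * h := by
    have : ladderDist h x y = Nat.dist x.row y.row * h + 1 := by simp [ladderDist, hx, hy, hxy]
    nlinarith [Nat.mul_le_mul_right h hrow]
  rw [stepRegret_ladderMetric, le_sub_iff_add_le']
  exact_mod_cast this

lemma stepRegret_ladderMetric_ofRow {h s t : ℕ} (hs : s ≤ 2 * h - 1) (ht : t ≤ 2 * h - 1)
    (b b' : Bool) :
    stepRegret (ladderMetric h 1) (.inl ()) (ofRow h s b) (ofRow h t b') =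
      Nat.dist s t * h + (if s ≠ 0 ∧ t ≠ 0 ∧ b ≠ b' then 1 else 0 : ℕ) + s * h - t * h := by
  rw [stepRegret_ladderMetric, ladderDist_ofRow hs ht, row_ofRow hs, row_ofRow ht]
  push_cast
  ring

lemma stepRegret_ladderMetric_ofRow_succ {h t : ℕ} (ht : t + 1 ≤ 2 * h - 1) (b : Bool) :
    stepRegret (ladderMetric h 1) (.inl ()) (ofRow h t b) (ofRow h (t + 1) b) = 0 := by
  rw [stepRegret_ladderMetric_ofRow (by omega) ht]
  simp [Nat.dist]
  ring

lemma stepRegret_ladderMetric_rung {h t : ℕ} (ht0 : t ≠ 0) (ht : t ≤ 2 * h - 1) (b : Bool) :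
    stepRegret (ladderMetric h 1) (.inl ()) (ofRow h t b) (ofRow h t !b) = 1 := by
  rw [stepRegret_ladderMetric_ofRow ht ht]
  simp [ht0]

lemma exists_ne_succ_of_ne {γ : Type*} (f : ℕ → γ) {p q : ℕ} (hpq : p ≤ q) (hne : f p ≠ f q) :
    ∃ k, p ≤ k ∧ k < q ∧ f k ≠ f (k + 1) := by
  by_contra! hconst
  have : ∀ k, p ≤ k → k ≤ q → f k = f p := by
    intro k hpk
    induction k, hpk using Nat.le_induction with
    | base => simp
    | succ k hpk ih => intro hkq; rw [← hconst k hpk (by omega), ih (by omega)]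
  exact hne (this q hpq le_rfl).symm

lemma exists_rung_step {h p q : ℕ} {W : ℕ → LadderNode h 1} (hpq : p ≤ q)
    (hmono : MonotoneOn (fun k => (W k).row) (Set.Icc p q)) (hrow : (W p).row = (W q).row)
    (hside : (W p).side ≠ (W q).side) :
    ∃ k, p ≤ k ∧ k < q ∧ (W k).row = (W p).row ∧ (W (k + 1)).row = (W p).row ∧
      (W k).side ≠ (W (k + 1)).side := by
  have hconst : ∀ k, p ≤ k → k ≤ q → (W k).row = (W p).row := fun k hpk hkq =>
    le_antisymm (hrow ▸ hmono ⟨hpk, hkq⟩ ⟨hpq, le_rfl⟩ hkq) (hmono ⟨le_rfl, hpq⟩ ⟨hpk, hkq⟩ hpk)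
  obtain ⟨k, hpk, hkq, hk⟩ := exists_ne_succ_of_ne (fun k => (W k).side) hpq hside
  exact ⟨k, hpk, hkq, hconst k hpk hkq.le, hconst (k + 1) (by omega) hkq, hk⟩

def rungSteps {h : ℕ} (W : ℕ → LadderNode h 1) (n : ℕ) : Finset ℕ :=
  {k ∈ range n | (W k).row ≠ 0 ∧ (W (k + 1)).row ≠ 0 ∧ (W k).side ≠ (W (k + 1)).side}

lemma le_card_rungSteps {h n : ℕ} {W : ℕ → LadderNode h 1}
    (hmono : MonotoneOn (fun k => (W k).row) (Set.Icc 0 n))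
    (hindex : ∀ v : LadderNode h 1, v ≠ .inl () → ∃ p ≤ n, W p = v) :
    2 * h - 1 ≤ #(rungSteps W n) := by
  refine le_trans (by simp)
    (card_le_card_of_surjOn (t := Icc 1 (2 * h - 1)) (fun k => (W k).row) fun s hs => ?_)
  rw [coe_Icc, Set.mem_Icc] at hs
  have hcross : ∀ p q, p ≤ q → q ≤ n → (W p).row = s → (W q).row = s →
      (W p).side ≠ (W q).side → s ∈ (fun k => (W k).row) '' (rungSteps W n : Set ℕ) := by
    intro p q hpq hqn hp hq hside
    obtain ⟨k, -, hkq, hk, hk1, hside⟩ := exists_rung_step hpq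
      (hmono.mono (Set.Icc_subset_Icc (Nat.zero_le p) hqn)) (hp.trans hq.symm) hside
    exact ⟨k, mem_filter.2 ⟨mem_range.2 (by omega), by omega, by omega, hside⟩, hk.trans hp⟩
  obtain ⟨p, hpn, hp⟩ := hindex _ (ofRow_ne_root (by omega) hs.2 true)
  obtain ⟨q, hqn, hq⟩ := hindex _ (ofRow_ne_root (by omega) hs.2 false)
  have hrow : ∀ b, (ofRow h s b).row = s := row_ofRow hs.2
  have hside : ∀ b, (ofRow h s b).side = b := side_ofRow (by omega) hs.2
  rcases le_total p q with hpq | hqp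
  · exact hcross p q hpq hqn (hp ▸ hrow _) (hq ▸ hrow _) (by simp [hp, hq, hside])
  · exact hcross q p hqp hpn (hq ▸ hrow _) (hp ▸ hrow _) (by simp [hp, hq, hside])

lemma le_pathRegret_of_covers {h : ℕ} {w : List (LadderNode h 1)}
    (hw : w.head? = some (.inl ())) (hcov : ∀ v : LadderNode h 1, v ≠ .inl () → v ∈ w.tail) :
    2 * (h : ℝ) - 1 ≤ pathRegret (ladderMetric h 1) (.inl ()) w := by
  rw [pathRegret_eq_sum_stepRegret _ (by simp [ladderMetric_root_left, row]) hw]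
  set W : ℕ → LadderNode h 1 := fun k => w.getD k (.inl ())
  set n := w.length - 1
  have hnonneg : ∀ k ∈ range n, 0 ≤ stepRegret (ladderMetric h 1) (.inl ()) (W k) (W (k + 1)) :=
    fun k _ => stepRegret_ladderMetric_nonneg _ _
  by_cases hdesc : ∃ k < n, (W (k + 1)).row < (W k).row
  · obtain ⟨k, hk, hlt⟩ := hdesc
    calc 2 * (h : ℝ) - 1 ≤ 2 * h := by linarith
      _ ≤ stepRegret (ladderMetric h 1) (.inl ()) (W k) (W (k + 1)) :=
          two_mul_le_stepRegret_ladderMetric hlt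
      _ ≤ _ := single_le_sum hnonneg (mem_range.2 hk)
  push Not at hdesc
  have hindex : ∀ v : LadderNode h 1, v ≠ .inl () → ∃ p ≤ n, W p = v := by
    intro v hv
    obtain ⟨p, hp, rfl⟩ := List.mem_iff_getElem.1 (List.mem_of_mem_tail (hcov v hv))
    exact ⟨p, by omega, List.getD_eq_getElem _ _ hp⟩
  have hcard := le_card_rungSteps
    (monotoneOn_of_le_add_one Set.ordConnected_Icc fun k _ _ hk => hdesc k hk.2) hindex
  calc 2 * (h : ℝ) - 1 ≤ #(rungSteps W n) := by
        have : ((2 * h : ℕ) : ℝ) ≤ (#(rungSteps W n) + 1 : ℕ) := Nat.cast_le.2 (by omega)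
        push_cast at this
        linarith
    _ = ∑ k ∈ rungSteps W n, 1 := by simp
    _ ≤ ∑ k ∈ rungSteps W n, stepRegret (ladderMetric h 1) (.inl ()) (W k) (W (k + 1)) :=
        sum_le_sum fun k hk => by
          obtain ⟨-, hk0, hk1, hside⟩ := mem_filter.1 hk
          exact one_le_stepRegret_ladderMetric hk0 hk1 hside
    _ ≤ _ := sum_le_sum_of_subset_of_nonneg (filter_subset _ _) fun k hk _ => hnonneg k hk

def switchNode (h i : ℕ) (b : Bool) (k : ℕ) : LadderNode h 1 :=
  if k ≤ i then ofRow h k b else ofRow h (k - 1) !b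

lemma ladderPath_eq_map {h i : ℕ} (hi : 1 ≤ i) (hi' : i ≤ 2 * h - 1) :
    ladderPath h i = (List.range (2 * h + 1)).map (switchNode h i (decide (i % 2 = 1))) := by
  have hsplit : List.range (2 * h) = List.range i ++ (List.range (2 * h - i)).map (i + ·) := by
    rw [← List.range_add]; congr 1; omega
  have hzero : ∀ b, switchNode h i b 0 = .inl () := fun b => by simp [switchNode, ofRow]
  have hup : ∀ b, (List.range i).map (ladNode h · b) =
      (List.range i).map (switchNode h i b ∘ Nat.succ) :=
    fun b => List.map_congr_left fun k hk => by
      simp [switchNode, ofRow, Nat.succ_le_of_lt (List.mem_range.1 hk)]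
  have hrest : ∀ b b', b' = !b → (List.range' (i - 1) (2 * h - i)).map (ladNode h · b') =
      (List.range (2 * h - i)).map ((switchNode h i b ∘ Nat.succ) ∘ (i + ·)) := by
    rintro b _ rfl
    rw [List.range'_eq_map_range, List.map_map]
    refine List.map_congr_left fun k _ => ?_
    simp only [Function.comp, switchNode, Nat.succ_eq_add_one, if_neg (by omega : ¬ i + k + 1 ≤ i),
      show i + k + 1 - 1 = (i - 1 + k) + 1 by omega]
    rfl
  rw [List.range_succ_eq_map, hsplit, List.map_cons, List.map_map, List.map_append, List.map_map]
  by_cases hpar : i % 2 = 1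
  · simp only [ladderPath, hpar, if_true, decide_true, hzero, hup, hrest true false rfl]
  · simp only [ladderPath, hpar, if_false, decide_false, hzero, hup, hrest false true rfl]

lemma switchNode_injOn {h i : ℕ} (hi : 1 ≤ i) (hi' : i ≤ 2 * h - 1) (b : Bool) :
    Set.InjOn (switchNode h i b) (Set.Iio (2 * h + 1)) := by
  intro k hk k' hk' heq
  simp only [Set.mem_Iio] at hk hk'
  unfold switchNode at heq
  split_ifs at heq <;> rw [ofRow_eq_ofRow_iff (by omega) (by omega)] at heq <;>
    simp at heq <;> omega

lemma exists_switchNode_eq_ofRow_iff {h i t : ℕ} (hi' : i ≤ 2 * h - 1) (b : Bool) (ht0 : t ≠ 0)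
    (ht : t ≤ 2 * h - 1) (b' : Bool) :
    (∃ k < 2 * h + 1, switchNode h i b k = ofRow h t b') ↔ if b = b' then t ≤ i else i ≤ t := by
  constructor
  · rintro ⟨k, hk, heq⟩
    unfold switchNode at heq
    split_ifs at heq ⊢ <;> rw [ofRow_eq_ofRow_iff (by omega) ht] at heq <;> simp_all <;> omega
  · split_ifs with hb
    · exact fun hti => ⟨t, by omega, by simp [switchNode, hti, hb]⟩
    · refine fun hit => ⟨t + 1, by omega, ?_⟩
      simp [switchNode, show ¬ t + 1 ≤ i by omega, Bool.eq_not.2 (Ne.symm hb)]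

lemma pathRegret_map_switchNode {h i : ℕ} (hi : 1 ≤ i) (hi' : i ≤ 2 * h - 1) (b : Bool) :
    pathRegret (ladderMetric h 1) (.inl ())
      ((List.range (2 * h + 1)).map (switchNode h i b)) = 1 := by
  rw [pathRegret_eq_sum_stepRegret _ (by simp [ladderMetric_root_left, row])
    (by simp [List.head?_range, switchNode, ofRow])]
  have hgetD : ∀ k < 2 * h + 1,
      ((List.range (2 * h + 1)).map (switchNode h i b)).getD k (.inl ()) = switchNode h i b k :=
    fun k hk => by simp [hk]
  simp only [List.length_map, List.length_range, Nat.add_sub_cancel]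
  rw [sum_congr rfl fun k hk => by
    rw [hgetD k (by simp at hk; omega), hgetD (k + 1) (by simp at hk; omega)]]
  rw [sum_eq_single_of_mem i (mem_range.2 (by omega))]
  · simpa [switchNode] using stepRegret_ladderMetric_rung (by omega) hi' b
  · intro k hk hki
    rw [mem_range] at hk
    rcases Nat.lt_or_gt_of_ne hki with hlt | hgt
    · simpa [switchNode, hlt.le, hlt] using stepRegret_ladderMetric_ofRow_succ (by omega) b
    · have := stepRegret_ladderMetric_ofRow_succ (h := h) (t := k - 1) (by omega) (!b)
      rw [Nat.sub_add_cancel (by omega)] at this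
      simpa [switchNode, show ¬k ≤ i by omega, show ¬k + 1 ≤ i by omega] using this

lemma mem_tail_ladderPath_iff {h i t : ℕ} (hi : 1 ≤ i) (hi' : i ≤ 2 * h - 1) (ht0 : t ≠ 0)
    (ht : t ≤ 2 * h - 1) (b : Bool) :
    ofRow h t b ∈ (ladderPath h i).tail ↔ if decide (i % 2 = 1) = b then t ≤ i else i ≤ t := by
  obtain ⟨l, hl⟩ : ∃ l, ladderPath h i = .inl () :: l := ⟨_, rfl⟩
  have hmem : ofRow h t b ∈ (ladderPath h i).tail ↔ ofRow h t b ∈ ladderPath h i := by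
    simp [hl, ofRow_ne_root ht0 ht]
  rw [hmem, ladderPath_eq_map hi hi', List.mem_map]
  simpa using exists_switchNode_eq_ofRow_iff hi' _ ht0 ht b

lemma card_filter_parity_eq {h t : ℕ} (ht0 : t ≠ 0) (ht : t ≤ 2 * h - 1) (b : Bool) :
    #{i ∈ Icc 1 (2 * h - 1) | if decide (i % 2 = 1) = b then t ≤ i else i ≤ t} = h := by
  -- exactly one member of each pair `{2j+1, 2j+2}` (if `b`), resp. `{2j, 2j+1}` (if `!b`)
  rw [← card_range h]
  cases b
  · refine card_nbij' (· / 2) (fun j => if 2 * j + 1 ≤ t then 2 * j + 1 else 2 * j)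
      ?_ ?_ ?_ ?_ <;> intro j hj <;> simp at hj ⊢ <;> split_ifs at * <;> omega
  · refine card_nbij' (fun i => (i - 1) / 2)
      (fun j => if t ≤ 2 * j + 1 then 2 * j + 1 else 2 * j + 2) ?_ ?_ ?_ ?_ <;>
      intro j hj <;> simp at hj ⊢ <;> split_ifs at * <;> omega

theorem single_ladder_properties_general (h : ℕ) :
    (∀ w : List (LadderNode h 1), IsRootedPath (Sum.inl () : LadderNode h 1) w →
      (∀ v : LadderNode h 1, v ≠ Sum.inl () → v ∈ w.tail) →
      2 * (h : ℝ) - 1 ≤ pathRegret (ladderMetric h 1) (Sum.inl ()) w) ∧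
    (∀ i, 1 ≤ i → i ≤ 2 * h - 1 →
      IsRootedPath (Sum.inl () : LadderNode h 1) (ladderPath h i) ∧
      pathRegret (ladderMetric h 1) (Sum.inl ()) (ladderPath h i) = 1) ∧
    (∀ v : LadderNode h 1, v ≠ Sum.inl () →
      ((Finset.Icc 1 (2 * h - 1)).filter
        (fun i => v ∈ (ladderPath h i).tail)).card = h) := by
  refine ⟨fun w hw hcov => le_pathRegret_of_covers hw.1 hcov, fun i hi hi' => ?_, fun v hv => ?_⟩
  · rw [IsRootedPath, ladderPath_eq_map hi hi']
    refine ⟨⟨by simp [List.head?_range, switchNode, ofRow], ?_⟩, pathRegret_map_switchNode hi hi' _⟩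
    exact List.nodup_range.map_on fun k hk k' hk' =>
      switchNode_injOn hi hi' _ (by simpa using hk) (by simpa using hk')
  · obtain ⟨t, ht, b, rfl⟩ := v.exists_eq_ofRow
    have ht0 : t ≠ 0 := by rintro rfl; exact hv rfl
    rw [filter_congr fun i hi => mem_tail_ladderPath_iff (mem_Icc.1 hi).1 (mem_Icc.1 hi).2 ht0 ht b]
    exact card_filter_parity_eq ht0 ht b

/-- in the shortest-path metric of a single ladder `L_h` rooted at `r`:
(a) every rooted path covering all non-root nodes has regret at least `2h−1`;
(b) for `1 ≤ i ≤ 2h−1`, the rooted path `P_i` has regret exactly `1`; and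
every non-root node lies on exactly `h` of the paths `P_1, …, P_{2h−1}`. -/
theorem single_ladder_properties (h : ℕ) (hh : 1 ≤ h) :
    (∀ w : List (LadderNode h 1), IsRootedPath (Sum.inl () : LadderNode h 1) w →
      (∀ v : LadderNode h 1, v ≠ Sum.inl () → v ∈ w.tail) →
      2 * (h : ℝ) - 1 ≤ pathRegret (ladderMetric h 1) (Sum.inl ()) w) ∧
    (∀ i, 1 ≤ i → i ≤ 2 * h - 1 →
      IsRootedPath (Sum.inl () : LadderNode h 1) (ladderPath h i) ∧
      pathRegret (ladderMetric h 1) (Sum.inl ()) (ladderPath h i) = 1) ∧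
    (∀ v : LadderNode h 1, v ≠ Sum.inl () →
      ((Finset.Icc 1 (2 * h - 1)).filter
        (fun i => v ∈ (ladderPath h i).tail)).card = h) :=
  single_ladder_properties_general h
end

section
/- Let c be an asymmetric metric on {r} ∪ V. Suppose rooted paths P_1, …, P_k cover all nodes of V, each with regret c^reg(P_i) ≤ R, where P_i ends at node v_i, and suppose there is a Hamiltonian cycle through {r} ∪ V of total cost L. Then Σ_{i=1}^k (c(P_i) + c(v_i, r)) ≤ k·(R + L); consequently, there is a closed walk starting and ending at r that visits every node of V and has total cost at most k·(R + L). -/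
/-!
The tour of cost `L` passes through `r` and through the endpoint `v` of every path, so
shortcutting it to `r → v → r` shows `c(r, v) + c(v, r) ≤ L`. Since `c(P) ≤ R + c(r, v)`,
closing each path at the root costs at most `R + L`. Concatenating the `k` closed paths gives
the required walk.
-/

section

variable {α : Type*} (c : α → α → ℝ)

theorem pathCost_append (d : α) {A B : List α} (hA : A ≠ []) (hB : B ≠ []) :
    pathCost c (A ++ B) = pathCost c A + c (A.getLastD d) (B.headD d) + pathCost c B := by
  obtain ⟨b, B, rfl⟩ := List.exists_cons_of_ne_nil hB
  induction A with
  | nil => exact absurd rfl hA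
  | cons a A ih =>
    cases A with
    | nil => simp [pathCost]
    | cons a' A =>
      simp only [List.cons_append, pathCost, List.getLastD_cons] at ih ⊢
      rw [ih (List.cons_ne_nil _ _)]
      ring

theorem pathCost_append_cons (x : α) (A B : List α) :
    pathCost c (A ++ x :: B) = pathCost c (A ++ [x]) + pathCost c (x :: B) := by
  rcases eq_or_ne A [] with rfl | hA
  · simp [pathCost]
  · rw [pathCost_append c x hA (List.cons_ne_nil _ _),
      pathCost_append c x hA (List.cons_ne_nil _ _)]
    simp [pathCost]

theorem pathCost_tour_rotate (d x : α) (A B : List α) :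
    pathCost c (A ++ x :: B ++ [(A ++ x :: B).headD d]) = pathCost c (x :: (B ++ A) ++ [x]) := by
  cases A with
  | nil => simp
  | cons y A =>
    have hl : y :: A ++ x :: B ++ [(y :: A ++ x :: B).headD d] = y :: A ++ x :: (B ++ [y]) := by
      simp
    have hr : x :: (B ++ y :: A) ++ [x] = x :: B ++ y :: (A ++ [x]) := by simp
    rw [hl, hr, pathCost_append_cons c x (y :: A), pathCost_append_cons c y (x :: B)]
    simp only [List.cons_append]
    ring

theorem pathCost_flatten_append_singleton (r : α) (Ls : List (List α))
    (hr : ∀ l ∈ Ls, l.head? = some r) :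
    pathCost c (Ls.flatten ++ [r]) = (Ls.map fun l => pathCost c l + c (l.getLastD r) r).sum := by
  induction Ls with
  | nil => simp [pathCost]
  | cons l Ls ih =>
    have hl : l ≠ [] := by rintro rfl; simp at hr
    have hhead : (Ls.flatten ++ [r]).headD r = r := by
      rcases Ls with _ | ⟨l', Ls⟩
      · rfl
      · obtain ⟨t, rfl⟩ := List.head?_eq_some_iff.1 (hr l' (by simp))
        rfl
    rw [List.flatten_cons, List.append_assoc,
      pathCost_append c r hl (by simp), hhead, ih fun l' hl' => hr l' (by simp [hl'])]
    simp only [List.map_cons, List.sum_cons]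

variable {c}

theorem pathCost_cons_le_add (hnn : ∀ u v, 0 ≤ c u v)
    (htri : ∀ u v w, c u v ≤ c u w + c w v)
    (x a : α) (s : List α) : pathCost c (x :: s) ≤ c x a + pathCost c (a :: s) := by
  cases s with
  | nil => simpa [pathCost] using hnn x a
  | cons y s =>
    simp only [pathCost]
    linarith [htri x y a]

theorem pathCost_cons_le_of_sublist (hnn : ∀ u v, 0 ≤ c u v)
    (htri : ∀ u v w, c u v ≤ c u w + c w v) {s t : List α} (h : s.Sublist t) (x : α) :
    pathCost c (x :: s) ≤ pathCost c (x :: t) := by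
  induction h generalizing x with
  | slnil => rfl
  | @cons s t a _ ih =>
    calc pathCost c (x :: s) ≤ c x a + pathCost c (a :: s) := pathCost_cons_le_add hnn htri x a s
      _ ≤ c x a + pathCost c (a :: t) := by linarith [ih a]
      _ = pathCost c (x :: a :: t) := rfl
  | cons_cons a _ ih =>
    simp only [pathCost]
    linarith [ih a]

theorem add_le_pathCost_tour (hnn : ∀ u v, 0 ≤ c u v) (hrefl : ∀ u, c u u = 0)
    (htri : ∀ u v w, c u v ≤ c u w + c w v) (d : α) {l : List α} {u v : α}
    (hu : u ∈ l) (hv : v ∈ l) : c u v + c v u ≤ pathCost c (l ++ [l.headD d]) := by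
  obtain ⟨A, B, rfl⟩ := List.append_of_mem hu
  rw [pathCost_tour_rotate]
  rcases eq_or_ne v u with rfl | hvu
  · rw [hrefl]
    simpa [pathCost] using
      pathCost_cons_le_of_sublist hnn htri (List.nil_sublist (B ++ A ++ [v])) v
  · have hvBA : v ∈ B ++ A := by
      simp only [List.mem_append, List.mem_cons] at hv ⊢
      tauto
    have hsub : [v, u].Sublist (B ++ A ++ [u]) :=
      (List.singleton_sublist.2 hvBA).append (List.Sublist.refl [u])
    simpa [pathCost] using pathCost_cons_le_of_sublist hnn htri hsub u

end

theorem asymmetric_rvrp_to_atsp_general {α : Type*} (c : α → α → ℝ) (r : α)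
    (hnn : ∀ u v, 0 ≤ c u v) (hrefl : ∀ u, c u u = 0)
    (htri : ∀ u v w, c u v ≤ c u w + c w v)
    (R L : ℝ) (k : ℕ) (P : Fin k → List α)
    (hP : ∀ i, IsRootedPath r (P i) ∧ pathRegret c r (P i) ≤ R)
    (hcov : ∀ v, v ≠ r → ∃ i, v ∈ (P i).tail)
    (l : List α) (hall : ∀ v, v ∈ l)
    (hL : pathCost c (l ++ [l.headD r]) = L) :
    (∑ i, (pathCost c (P i) + c ((P i).getLastD r) r) ≤ k * (R + L)) ∧
    ∃ W : List α, W.head? = some r ∧ W.getLast? = some r ∧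
      (∀ v, v ∈ W) ∧ pathCost c W ≤ k * (R + L) := by
  have hclosed : ∀ i, pathCost c (P i) + c ((P i).getLastD r) r ≤ R + L := fun i => by
    have hround := add_le_pathCost_tour hnn hrefl htri r (hall r) (hall ((P i).getLastD r))
    have hreg := (hP i).2
    rw [pathRegret] at hreg
    linarith
  have hsum : ∑ i, (pathCost c (P i) + c ((P i).getLastD r) r) ≤ k * (R + L) := by
    simpa [mul_add] using Finset.sum_le_card_nsmul Finset.univ _ _ fun i _ => hclosed i
  refine ⟨hsum, (List.ofFn P).flatten ++ [r], ?_, by simp, fun v => ?_, ?_⟩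
  · cases k with
    | zero => simp
    | succ k => simp [List.ofFn_succ, (hP 0).1.1]
  · rcases eq_or_ne v r with rfl | hv
    · simp
    · obtain ⟨i, hi⟩ := hcov v hv
      simpa using Or.inl ⟨i, List.mem_of_mem_tail hi⟩
  · rwa [pathCost_flatten_append_singleton c r _ (by simpa using fun i => (hP i).1.1),
      List.map_ofFn, List.sum_ofFn]

/-- let `c` be an asymmetric metric on `{r} ∪ V`, let rooted paths
`P_1, …, P_k` cover all of `V`, each of regret at most `R` and with `P_i` ending at `v_i`,
and suppose there is a Hamiltonian cycle through `{r} ∪ V` of total cost `L`.  Then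
`Σ_i (c(P_i) + c(v_i, r)) ≤ k·(R + L)`; consequently there is a closed walk starting and
ending at `r`, visiting every node, of total cost at most `k·(R + L)`. -/
theorem asymmetric_rvrp_to_atsp {α : Type*} [Fintype α] (c : α → α → ℝ) (r : α)
    (hnn : ∀ u v, 0 ≤ c u v) (hrefl : ∀ u, c u u = 0)
    (htri : ∀ u v w, c u v ≤ c u w + c w v)
    (R L : ℝ) (k : ℕ) (P : Fin k → List α)
    (hP : ∀ i, IsRootedPath r (P i) ∧ pathRegret c r (P i) ≤ R)
    (hcov : ∀ v, v ≠ r → ∃ i, v ∈ (P i).tail)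
    (l : List α) (hnodup : l.Nodup) (hall : ∀ v, v ∈ l)
    (hL : pathCost c (l ++ [l.headD r]) = L) :
    (∑ i, (pathCost c (P i) + c ((P i).getLastD r) r) ≤ k * (R + L)) ∧
    ∃ W : List α, W.head? = some r ∧ W.getLast? = some r ∧
      (∀ v, v ∈ W) ∧ pathCost c W ≤ k * (R + L) :=
  asymmetric_rvrp_to_atsp_general c r hnn hrefl htri R L k P hP hcov l hall hL
end
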